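/- Let P^n (n ≥ 3) be a simple n-polytope. The face code B_k(P) ⊆ F_2^{V(P)} is self-dual if and only if: |V(P)| is even, dim B_k(P) = |V(P)|/2, and every face of P of codimension j with k ≤ j ≤ 2k has an even number of vertices. -/

import Mathlib

/-! The dot product on `𝔽₂^V` is nondegenerate, so `dim C + dim C^⊥ = |V|` and `C = C^⊥` exactly
when `C ⊆ C^⊥` and `2 dim C = |V|`. For the face code, `C ⊆ C^⊥` says that `ξ_f ⬝ ξ_g = |f ∩ g|`
is even for all codimension-`k` faces `f, g`. A nonempty such intersection is a face of
codimension between `k` and `2k`; conversely, splitting the `j ∈ [k, 2k]` facets cutting out a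
face into two overlapping sets of `k` facets writes it as an intersection of two
codimension-`k` faces. -/

/-- The dual code of `C` with respect to the standard bilinear form `⟨x,y⟩ = ∑ xᵢyᵢ`. -/
def dualCode {V : Type*} [Fintype V] (C : Submodule (ZMod 2) (V → ZMod 2)) :
    Submodule (ZMod 2) (V → ZMod 2) where
  carrier := { x | ∀ c ∈ C, ∑ v, x v * c v = 0 }
  add_mem' := by
    intro a b ha hb c hc
    simp only [Set.mem_setOf_eq, Pi.add_apply, add_mul, Finset.sum_add_distrib] at *
    rw [ha c hc, hb c hc, add_zero]
  zero_mem' := by intro c hc; simp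
  smul_mem' := by
    intro r x hx c hc
    simp only [Set.mem_setOf_eq, Pi.smul_apply, smul_eq_mul, mul_assoc, ← Finset.mul_sum] at *
    rw [hx c hc, mul_zero]

/-- An abstract (combinatorial) simple `n`-polytope, recorded by its vertex–facet
incidences: each facet is given by its vertex set. Every vertex lies on exactly `n`
facets, whose intersection is that vertex alone; codimension-`(n-1)` faces (edges)
have exactly two vertices; and the 1-skeleton (graph of vertices and edges) is
connected. -/
structure SimplePolytope (n : ℕ) (V : Type*) [Fintype V] [DecidableEq V] where
  facets : Finset (Finset V)
  facet_nonempty : ∀ F ∈ facets, F.Nonempty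
  vertex_facets_card : ∀ v : V, (facets.filter (fun F => v ∈ F)).card = n
  vertex_inf : ∀ v : V, (facets.filter (fun F => v ∈ F)).inf id = {v}
  edge_card : ∀ S ⊆ facets, S.card = n - 1 → (S.inf id).Nonempty → (S.inf id).card = 2
  connected : (SimpleGraph.fromRel (fun v w : V =>
      ∃ S ⊆ facets, S.card = n - 1 ∧ S.inf id = {v, w})).Connected

namespace SimplePolytope

variable {n : ℕ} {V : Type*} [Fintype V] [DecidableEq V]

/-- `f` is a (nonempty) face of codimension `k`: the intersection of `k` distinct
facets (for `k = 0` the whole vertex set). -/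
def IsFace (P : SimplePolytope n V) (k : ℕ) (f : Finset V) : Prop :=
  f.Nonempty ∧ ∃ S ⊆ P.facets, S.card = k ∧ f = S.inf id

/-- The indicator vector `ξ_f ∈ 𝔽₂^V` of a vertex set `f`. -/
def ind (f : Finset V) : V → ZMod 2 := fun v => if v ∈ f then 1 else 0

/-- The codimension-`k` face code `𝔅_k(P)`: the span of the indicator vectors of the
codimension-`k` faces. -/
def faceCode (P : SimplePolytope n V) (k : ℕ) : Submodule (ZMod 2) (V → ZMod 2) :=
  Submodule.span (ZMod 2) { x | ∃ f, P.IsFace k f ∧ x = ind f }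

/-- A proper coloring of the facets: intersecting facets receive distinct colors. -/
def IsProperColoring (P : SimplePolytope n V) (c : Finset V → Fin n) : Prop :=
  ∀ F ∈ P.facets, ∀ G ∈ P.facets, F ≠ G → (F ∩ G).Nonempty → c F ≠ c G

/-- `P` is `n`-colorable. -/
def Colorable (P : SimplePolytope n V) : Prop := ∃ c, P.IsProperColoring c

end SimplePolytope

open Matrix

section DualCode

variable {V : Type*} [Fintype V]

theorem dualCode_eq_orthogonal [DecidableEq V] (C : Submodule (ZMod 2) (V → ZMod 2)) :
    dualCode C = (Matrix.toBilin' (1 : Matrix V V (ZMod 2))).orthogonal C := by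
  ext x
  simp only [LinearMap.BilinForm.mem_orthogonal_iff, Matrix.toBilin'_apply', one_mulVec,
    dotProduct_comm _ x]
  rfl

theorem finrank_add_finrank_dualCode (C : Submodule (ZMod 2) (V → ZMod 2)) :
    Module.finrank (ZMod 2) C + Module.finrank (ZMod 2) (dualCode C) = Fintype.card V := by
  classical
  have hnondeg : (Matrix.toBilin' (1 : Matrix V V (ZMod 2))).Nondegenerate :=
    Matrix.nondegenerate_toBilin'_iff.2 (Matrix.nondegenerate_of_det_ne_zero (by simp))
  have hle := Submodule.finrank_le C
  rw [dualCode_eq_orthogonal, LinearMap.BilinForm.finrank_orthogonal hnondeg,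
    Module.finrank_fintype_fun_eq_card]
  rw [Module.finrank_fintype_fun_eq_card] at hle
  omega

theorem eq_dualCode_iff (C : Submodule (ZMod 2) (V → ZMod 2)) :
    C = dualCode C ↔ C ≤ dualCode C ∧ 2 * Module.finrank (ZMod 2) C = Fintype.card V := by
  have hsum := finrank_add_finrank_dualCode C
  constructor
  · intro h
    refine ⟨h.le, ?_⟩
    rw [← h] at hsum
    omega
  · rintro ⟨hle, hdim⟩
    exact Submodule.eq_of_le_of_finrank_le hle (by omega)

theorem mem_dualCode_span_iff {s : Set (V → ZMod 2)} {x : V → ZMod 2} :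
    x ∈ dualCode (Submodule.span (ZMod 2) s) ↔ ∀ c ∈ s, x ⬝ᵥ c = 0 :=
  show Submodule.span (ZMod 2) s ≤ LinearMap.ker (dotProductBilin (ZMod 2) (ZMod 2) x) ↔ _ from
    Submodule.span_le

theorem span_le_dualCode_span_iff {s : Set (V → ZMod 2)} :
    Submodule.span (ZMod 2) s ≤ dualCode (Submodule.span (ZMod 2) s) ↔
      ∀ x ∈ s, ∀ y ∈ s, x ⬝ᵥ y = 0 := by
  simp only [Submodule.span_le, Set.subset_def, SetLike.mem_coe, mem_dualCode_span_iff]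

end DualCode

namespace SimplePolytope

variable {n : ℕ} {V : Type*} [Fintype V] [DecidableEq V] {P : SimplePolytope n V}

theorem ind_dotProduct_ind (f g : Finset V) : ind f ⬝ᵥ ind g = ((f ∩ g).card : ZMod 2) := by
  have hmul : ∀ v, ind f v * ind g v = if v ∈ f ∩ g then 1 else 0 := by
    intro v
    simp only [ind, Finset.mem_inter, ite_zero_mul_ite_zero, mul_one]
  simp only [dotProduct, hmul, Finset.sum_boole, Finset.filter_mem_eq_inter, Finset.univ_inter]

theorem isFace_inf_of_subset {S T : Finset (Finset V)} (hS : S ⊆ P.facets)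
    (hne : (S.inf id).Nonempty) (hTS : T ⊆ S) : P.IsFace T.card (T.inf id) :=
  ⟨hne.mono (Finset.inf_mono hTS), T, hTS.trans hS, rfl, rfl⟩

theorem IsFace.exists_isFace_inter {i j : ℕ} {f g : Finset V} (hf : P.IsFace i f)
    (hg : P.IsFace j g) (hfg : (f ∩ g).Nonempty) :
    ∃ l, i ≤ l ∧ j ≤ l ∧ l ≤ i + j ∧ P.IsFace l (f ∩ g) := by
  obtain ⟨-, S, hS, rfl, rfl⟩ := hf
  obtain ⟨-, T, hT, rfl, rfl⟩ := hg
  have hinter : S.inf id ∩ T.inf id = (S ∪ T).inf id := by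
    rw [Finset.inf_union, Finset.inf_eq_inter]
  rw [hinter] at hfg ⊢
  exact ⟨(S ∪ T).card, Finset.card_le_card Finset.subset_union_left,
    Finset.card_le_card Finset.subset_union_right, Finset.card_union_le S T,
    hfg, S ∪ T, Finset.union_subset hS hT, rfl, rfl⟩

theorem IsFace.exists_eq_inter {i j l : ℕ} {f : Finset V} (hf : P.IsFace l f)
    (hi : i ≤ l) (hj : j ≤ l) (hl : l ≤ i + j) :
    ∃ g h, P.IsFace i g ∧ P.IsFace j h ∧ g ∩ h = f := by
  obtain ⟨hne, S, hS, rfl, rfl⟩ := hf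
  obtain ⟨S₁, hS₁, rfl⟩ := Finset.exists_subset_card_eq hi
  obtain ⟨S₂, hdiff, hS₂, rfl⟩ := Finset.exists_subsuperset_card_eq (Finset.sdiff_subset (t := S₁))
    (by rw [Finset.card_sdiff_of_subset hS₁]; omega) hj
  have hunion : S₁ ∪ S₂ = S :=
    (Finset.union_subset hS₁ hS₂).antisymm fun F hF => by
      by_cases h₁ : F ∈ S₁
      · exact Finset.mem_union_left _ h₁
      · exact Finset.mem_union_right _ (hdiff (Finset.mem_sdiff.2 ⟨hF, h₁⟩))
  refine ⟨_, _, isFace_inf_of_subset hS hne hS₁, isFace_inf_of_subset hS hne hS₂, ?_⟩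
  rw [← Finset.inf_eq_inter, ← Finset.inf_union, hunion]

theorem faceCode_le_dualCode_iff {k : ℕ} :
    P.faceCode k ≤ dualCode (P.faceCode k) ↔
      ∀ j, k ≤ j → j ≤ 2 * k → ∀ f, P.IsFace j f → Even f.card := by
  simp only [faceCode, span_le_dualCode_span_iff, Set.mem_ofPred_eq]
  constructor
  · intro hortho j hkj hj f hf
    obtain ⟨g, h, hg, hh, rfl⟩ := hf.exists_eq_inter hkj hkj (by omega)
    rw [← ZMod.natCast_eq_zero_iff_even, ← ind_dotProduct_ind]
    exact hortho _ ⟨g, hg, rfl⟩ _ ⟨h, hh, rfl⟩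
  · rintro heven _ ⟨f, hf, rfl⟩ _ ⟨g, hg, rfl⟩
    rw [ind_dotProduct_ind, ZMod.natCast_eq_zero_iff_even]
    obtain hempty | hfg := (f ∩ g).eq_empty_or_nonempty
    · simp [hempty]
    · obtain ⟨l, hkl, -, hl, hface⟩ := hf.exists_isFace_inter hg hfg
      exact heven l hkl (by omega) _ hface

end SimplePolytope

theorem faceCode_selfDual_iff_general {n : ℕ} {V : Type*} [Fintype V] [DecidableEq V]
    (P : SimplePolytope n V) (k : ℕ) :
    P.faceCode k = dualCode (P.faceCode k) ↔
      (Even (Fintype.card V) ∧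
       Module.finrank (ZMod 2) (P.faceCode k) = Fintype.card V / 2 ∧
       ∀ j, k ≤ j → j ≤ 2 * k → ∀ f, P.IsFace j f → Even f.card) := by
  rw [eq_dualCode_iff, SimplePolytope.faceCode_le_dualCode_iff, Nat.even_iff]
  constructor
  · rintro ⟨heven, hdim⟩
    exact ⟨by omega, by omega, heven⟩
  · rintro ⟨hcard, hdim, heven⟩
    exact ⟨heven, by omega⟩

/-- For a simple `n`-polytope `P` with `n ≥ 3`, the face code `𝔅_k(P)` is self-dual if
and only if `|V(P)|` is even, `dim 𝔅_k(P) = |V(P)|/2`, and every face of codimension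
`j` with `k ≤ j ≤ 2k` has an even number of vertices. -/
theorem faceCode_selfDual_iff {n : ℕ} {V : Type*} [Fintype V] [DecidableEq V]
    (P : SimplePolytope n V) (hn : 3 ≤ n) (k : ℕ) :
    P.faceCode k = dualCode (P.faceCode k) ↔
      (Even (Fintype.card V) ∧
       Module.finrank (ZMod 2) (P.faceCode k) = Fintype.card V / 2 ∧
       ∀ j, k ≤ j → j ≤ 2 * k → ∀ f, P.IsFace j f → Even f.card) :=
  faceCode_selfDual_iff_general P k
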